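/- Let G be the path graph on vertices v_1, v_2, …, v_n (n ≥ 3, with v_j adjacent to v_{j+1} for 1 ≤ j ≤ n−1), with v_out = v_1 and v_in = v_n. Then Ψ(G) is exactly the set of vectors of the form 𝟙 + Σ_{j=2}^{n−1} α_j f_j, where f_j = e_j + e_{j+1}, 𝟙 is the all-ones vector in ℝ^n, and α_j > 0 for each 2 ≤ j ≤ n−1. -/

import Mathlib

open scoped Classical

noncomputable section

/-- The trace of a walk: the number of occurrences of each vertex along the walk,
viewed as a vector in `ℝ^V`. -/
def trace {V : Type*} [DecidableEq V] {G : SimpleGraph V} {u v : V} (ω : G.Walk u v) : V → ℝ :=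
  fun x => (ω.support.count x : ℝ)

/-- A walk from `vin` to `vout` is proper if it visits `vout` exactly once
(namely as its final vertex). -/
def IsProper {V : Type*} [DecidableEq V] {G : SimpleGraph V} {vin vout : V}
    (ω : G.Walk vin vout) : Prop :=
  ω.support.count vout = 1

/-- The set of traces of proper walks from `vin` to `vout`, as vectors in `ℝ^V`. -/
def traceSet {V : Type*} [DecidableEq V] (G : SimpleGraph V) (vin vout : V) : Set (V → ℝ) :=
  {f | ∃ ω : G.Walk vin vout, IsProper ω ∧ f = trace ω}

/-- `Ψ(G)`: the relative interior (interior with respect to the affine span) of the convex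
hull of the traces of proper walks from `vin` to `vout`. -/
def Psi {V : Type*} [Fintype V] [DecidableEq V] (G : SimpleGraph V) (vin vout : V) :
    Set (V → ℝ) :=
  intrinsicInterior ℝ (convexHull ℝ (traceSet G vin vout))

/-- The matrix `M_β` associated to a graph `G` with distinguished vertices `vin, vout`
and vertex weights `β`. -/
def Mmat {V : Type*} [Fintype V] [DecidableEq V] (G : SimpleGraph V) (vin vout : V)
    (β : V → ℝ) : Matrix V V ℝ :=
  fun v w =>
    if (v = vout ∧ w = vout) ∨ (v = vin ∧ w = vout) then 1
    else if G.Adj v w ∧ v ≠ vout ∧ w ≠ vout then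
      β v / ∑ u ∈ Finset.univ.filter (fun u => G.Adj u w), β u
    else 0

/-- The equation `τ_ρ = r` is solvable on `G`: there is a positive vertex-weight function `β`
with `M_β r = r` and `r(vout) = 1`. -/
def Solvable {V : Type*} [Fintype V] [DecidableEq V] (G : SimpleGraph V) (vin vout : V)
    (r : V → ℝ) : Prop :=
  ∃ β : V → ℝ, (∀ v, 0 < β v) ∧ (Mmat G vin vout β).mulVec r = r ∧ r vout = 1

/-- `f_j = e_j + e_{j+1}` (1-based indexing of the vertices of the path `v_1, …, v_n`,
so vertex `v_j` is index `j - 1` in `Fin n`). -/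
def pathF (n : ℕ) (j : ℕ) : Fin n → ℝ :=
  fun i => (if (i : ℕ) + 1 = j then 1 else 0) + (if (i : ℕ) + 1 = j + 1 then 1 else 0)

/-!
By induction along the walk, a proper walk from `v_k` to `v_1` has trace
`𝟙_{v_1, …, v_k} + Σ c_j f_j` with `c_j ∈ ℕ`: a first step down to `v_{k-1}` only enlarges the
indicator, and a first step up to `v_{k+1}` (where `k ≥ 2`, since `v_1` is visited only at the end)
contributes `e_k + e_{k+1} = f_k`. Conversely, a walk from `v_n` to `v_1` visits every vertex, so a
simple one has trace `𝟙`, and inserting a detour `v_j → v_{j+1} → v_j` adds `f_j`. Hence the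
traces are the image of `ℕ^J`, `J = {2, …, n-1}`, under the affine map `T α = 𝟙 + Σ α_j f_j`, and
their convex hull is the image of the orthant `ℝ≥0^J`. The `f_j` are linearly independent, so `T`
is injective and restricts to a homeomorphism between affine spans; it therefore carries the
relative interior of the orthant, the open orthant, onto `Ψ(G)`.
-/

section Trace

variable {V : Type*} [DecidableEq V] {G : SimpleGraph V}

lemma trace_cons {u v w : V} (h : G.Adj u v) (p : G.Walk v w) :
    trace (.cons h p) = Pi.single u 1 + trace p := by
  ext x
  by_cases hx : x = u <;> simp [trace, hx, Ne.symm, add_comm]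

lemma trace_append_add_single {u v w : V} (p : G.Walk u v) (q : G.Walk v w) :
    trace (p.append q) + Pi.single v 1 = trace p + trace q := by
  ext x
  have hq := congrArg (List.count x) q.cons_tail_support
  simp only [trace, Pi.add_apply, Pi.single_apply, SimpleGraph.Walk.support_append,
    List.count_append, ← hq, List.count_cons, beq_iff_eq]
  by_cases hx : x = v
  · subst hx
    simp only [if_true]
    push_cast
    ring
  · simp only [hx, Ne.symm hx, if_false]
    push_cast
    ring

lemma isProper_iff_trace_eq_one {vin vout : V} (ω : G.Walk vin vout) :
    IsProper ω ↔ trace ω vout = 1 := by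
  simp [IsProper, trace]

lemma exists_trace_eq_add_single_add_single {a b u v : V} (ω : G.Walk a b)
    (hu : u ∈ ω.support) (h : G.Adj u v) :
    ∃ ω' : G.Walk a b, trace ω' = trace ω + Pi.single u 1 + Pi.single v 1 := by
  refine ⟨(ω.takeUntil u hu).append (.cons h (.cons h.symm (ω.dropUntil u hu))), ?_⟩
  have h₁ := trace_append_add_single (ω.takeUntil u hu)
    (.cons h (.cons h.symm (ω.dropUntil u hu)))
  have h₂ := trace_append_add_single (ω.takeUntil u hu) (ω.dropUntil u hu)
  rw [ω.take_spec hu] at h₂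
  rw [trace_cons, trace_cons] at h₁
  linear_combination h₁ - h₂

lemma SimpleGraph.Walk.IsPath.trace_le_one {a b : V} {p : G.Walk a b} (hp : p.IsPath)
    (x : V) : trace p x ≤ 1 := by
  simpa [trace] using List.nodup_iff_count_le_one.mp hp.support_nodup x

lemma isProper_cons_iff {u v w : V} (h : G.Adj u v) (p : G.Walk v w) :
    IsProper (.cons h p) ↔ u ≠ w ∧ IsProper p := by
  have hw : 0 < p.support.count w := List.count_pos_iff.mpr p.end_mem_support
  simp only [IsProper, SimpleGraph.Walk.support_cons, List.count_cons, beq_iff_eq]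
  split_ifs with huw
  · simp only [huw, ne_eq, not_true_eq_false, false_and, iff_false]
    omega
  · simp only [huw, ne_eq, not_false_eq_true, true_and, add_zero]

end Trace

section IntrinsicInterior

variable {𝕜 V P : Type*}

theorem intrinsicInterior_eq_interior_of_affineSpan_eq_top [Ring 𝕜] [AddCommGroup V]
    [Module 𝕜 V] [TopologicalSpace P] [AddTorsor V P] {s : Set P} (h : affineSpan 𝕜 s = ⊤) :
    intrinsicInterior 𝕜 s = interior s := by
  refine Set.Subset.antisymm ?_ interior_subset_intrinsicInterior
  have hspan : IsOpen (affineSpan 𝕜 s : Set P) := by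
    rw [h, AffineSubspace.top_coe]
    exact isOpen_univ
  have hopen : IsOpenMap ((↑) : affineSpan 𝕜 s → P) := hspan.isOpenEmbedding_subtypeVal.isOpenMap
  exact (hopen.image_interior_subset _).trans (interior_mono (Set.image_preimage_subset _ _))

variable {W Q : Type*} [NontriviallyNormedField 𝕜] [CompleteSpace 𝕜]
  [NormedAddCommGroup V] [NormedSpace 𝕜 V] [FiniteDimensional 𝕜 V] [MetricSpace P]
  [NormedAddTorsor V P] [NormedAddCommGroup W] [NormedSpace 𝕜 W] [MetricSpace Q]
  [NormedAddTorsor W Q]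

theorem AffineMap.intrinsicInterior_image_of_injective (φ : P →ᵃ[𝕜] Q)
    (hφ : Function.Injective φ) (s : Set P) :
    intrinsicInterior 𝕜 (φ '' s) = φ '' intrinsicInterior 𝕜 s := by
  rcases s.eq_empty_or_nonempty with rfl | hs
  · simp
  have : Nonempty (affineSpan 𝕜 s) := (hs.mono (subset_affineSpan 𝕜 s)).to_subtype
  have : Nonempty (affineSpan 𝕜 (φ '' s)) :=
    ((hs.image φ).mono (subset_affineSpan 𝕜 _)).to_subtype
  let e : affineSpan 𝕜 s ≃ᵃ[𝕜] affineSpan 𝕜 (φ '' s) :=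
    ((affineSpan 𝕜 s).equivMapOfInjective φ hφ).trans
      (AffineEquiv.ofEq _ _ (AffineSubspace.map_span φ s))
  have he : ((↑) : affineSpan 𝕜 (φ '' s) → Q) ∘ e = φ ∘ (↑) := rfl
  rw [intrinsicInterior, ← image_interior_preimage_comp e
    (AffineEquiv.toContinuousAffineEquiv e).toHomeomorph.isHomeomorph, he, Set.preimage_comp,
    hφ.preimage_image, Set.image_comp]
  rfl

theorem intrinsicInterior_univ_pi_Ici {ι : Type*} [Fintype ι] :
    intrinsicInterior ℝ (Set.univ.pi fun _ : ι => Set.Ici (0 : ℝ)) =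
      Set.univ.pi fun _ => Set.Ioi 0 := by
  have hpos : IsOpen (Set.univ.pi fun _ : ι => Set.Ioi (0 : ℝ)) :=
    isOpen_set_pi Set.finite_univ fun _ _ => isOpen_Ioi
  have hsub : (Set.univ.pi fun _ : ι => Set.Ioi (0 : ℝ)) ⊆ Set.univ.pi fun _ => Set.Ici 0 :=
    Set.pi_mono fun _ _ => Set.Ioi_subset_Ici_self
  have htop : affineSpan ℝ (Set.univ.pi fun _ : ι => Set.Ici (0 : ℝ)) = ⊤ :=
    top_unique <| (hpos.affineSpan_eq_top ⟨1, fun _ _ => Set.mem_Ioi.mpr one_pos⟩).ge.trans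
      (affineSpan_mono ℝ hsub)
  rw [intrinsicInterior_eq_interior_of_affineSpan_eq_top htop, interior_pi_set Set.finite_univ]
  simp

end IntrinsicInterior

theorem convexHull_range_natCast {𝕜 : Type*} [Field 𝕜] [LinearOrder 𝕜] [IsStrictOrderedRing 𝕜]
    [FloorSemiring 𝕜] : convexHull 𝕜 (Set.range ((↑) : ℕ → 𝕜)) = Set.Ici 0 := by
  refine Set.Subset.antisymm
    (convexHull_min (Set.range_subset_iff.mpr fun m => Nat.cast_nonneg m) (convex_Ici 0)) ?_
  intro x hx
  have hseg : x ∈ segment 𝕜 (⌊x⌋₊ : 𝕜) ((⌊x⌋₊ + 1 : ℕ) : 𝕜) := by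
    rw [segment_eq_Icc (by push_cast; linarith)]
    exact ⟨Nat.floor_le hx, by push_cast; exact (Nat.lt_floor_add_one x).le⟩
  exact segment_subset_convexHull (Set.mem_range_self _) (Set.mem_range_self _) hseg

section PathGraph

open SimpleGraph

variable {n : ℕ}

lemma pathGraph_walk_mem_support {a b i : Fin n} (ω : (pathGraph n).Walk a b)
    (hb : b ≤ i) (ha : i ≤ a) : i ∈ ω.support := by
  induction ω with
  | nil => simp [le_antisymm ha hb]
  | @cons u v w h p ih =>
    rw [pathGraph_adj] at h
    rw [Walk.support_cons, List.mem_cons]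
    by_cases hiu : i = u
    · exact .inl hiu
    · refine .inr (ih hb ?_)
      rw [Fin.le_def] at ha ⊢
      have := Fin.val_ne_of_ne hiu
      omega

lemma pathF_eq_single_add_single {i j : Fin n} (hij : (j : ℕ) = i + 1) :
    pathF n j = Pi.single i 1 + Pi.single j 1 := by
  ext k
  simp only [pathF, Pi.add_apply, Pi.single_apply, Fin.ext_iff]
  split_ifs <;> first | omega | norm_num

def pathNatSpan (n : ℕ) : AddSubmonoid (Fin n → ℝ) :=
  AddSubmonoid.closure (Set.range fun j : Finset.Icc 2 (n - 1) => pathF n j)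

lemma pathF_mem_pathNatSpan {j : ℕ} (hj : j ∈ Finset.Icc 2 (n - 1)) :
    pathF n j ∈ pathNatSpan n :=
  AddSubmonoid.subset_closure ⟨⟨j, hj⟩, rfl⟩

lemma exists_trace_eq_indicator_add {a b : Fin n} (ω : (pathGraph n).Walk a b)
    (hb : (b : ℕ) = 0) (hω : IsProper ω) :
    ∃ m ∈ pathNatSpan n, trace ω = (Set.Iic a).indicator 1 + m := by
  induction ω with
  | nil =>
    refine ⟨0, zero_mem _, ?_⟩
    ext i
    simp only [trace, Walk.support_nil, List.count_singleton, Pi.add_apply, Pi.zero_apply,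
      Set.indicator_apply, Set.mem_Iic, Pi.one_apply, Fin.le_def, Fin.ext_iff, beq_iff_eq]
    split_ifs <;> first | omega | simp
  | @cons u v w h p ih =>
    rw [isProper_cons_iff] at hω
    obtain ⟨m, hm, hp⟩ := ih hb hω.2
    have hu : (u : ℕ) ≠ 0 := fun hu => hω.1 (Fin.ext (hu.trans hb.symm))
    rw [trace_cons, hp]
    rcases (pathGraph_adj).mp h with h | h
    · refine ⟨pathF n v + m, add_mem (pathF_mem_pathNatSpan ?_) hm, ?_⟩
      · simp only [Finset.mem_Icc]; omega
      rw [pathF_eq_single_add_single h.symm]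
      ext i
      simp only [Pi.add_apply, Set.indicator_apply, Set.mem_Iic, Pi.one_apply, Pi.single_apply,
        Fin.le_def, Fin.ext_iff]
      split_ifs <;> first | omega | ring
    · refine ⟨m, hm, ?_⟩
      ext i
      simp only [Pi.add_apply, Set.indicator_apply, Set.mem_Iic, Pi.one_apply, Pi.single_apply,
        Fin.le_def, Fin.ext_iff]
      split_ifs <;> first | omega | ring

lemma trace_eq_one_of_isPath {a b : Fin n} (ha : (a : ℕ) = n - 1) (hb : (b : ℕ) = 0)
    {p : (pathGraph n).Walk a b} (hp : p.IsPath) : trace p = 1 := by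
  ext i
  refine le_antisymm (hp.trace_le_one i) ?_
  have hi : i ∈ p.support :=
    pathGraph_walk_mem_support p (by rw [Fin.le_def]; omega) (by rw [Fin.le_def]; omega)
  simpa [trace] using List.count_pos_iff.mpr hi

lemma exists_isProper_trace_eq_one_add {a b : Fin n} (ha : (a : ℕ) = n - 1)
    (hb : (b : ℕ) = 0) {m : Fin n → ℝ} (hm : m ∈ pathNatSpan n) :
    ∃ ω : (pathGraph n).Walk a b, IsProper ω ∧ trace ω = 1 + m := by
  induction hm using AddSubmonoid.closure_induction_left with
  | zero =>
    let p := (pathGraph_preconnected n a b).some.toPath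
    refine ⟨p, ?_, by rw [add_zero, trace_eq_one_of_isPath ha hb p.2]⟩
    rw [isProper_iff_trace_eq_one, trace_eq_one_of_isPath ha hb p.2, Pi.one_apply]
  | add_left f hf m hm ih =>
    obtain ⟨⟨j, hj⟩, rfl⟩ := hf
    rw [Finset.mem_Icc] at hj
    obtain ⟨ω, hω, htr⟩ := ih
    let u : Fin n := ⟨j - 1, by omega⟩
    let v : Fin n := ⟨j, by omega⟩
    have huv : (pathGraph n).Adj u v := by rw [pathGraph_adj]; left; simp [u, v]; omega
    have hu : u ∈ ω.support :=
      pathGraph_walk_mem_support ω (by rw [Fin.le_def]; omega) (by rw [Fin.le_def]; omega)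
    obtain ⟨ω', htr'⟩ := exists_trace_eq_add_single_add_single ω hu huv
    refine ⟨ω', ?_, ?_⟩
    · rw [isProper_iff_trace_eq_one] at hω ⊢
      have hub : b ≠ u := by rw [Ne, Fin.ext_iff]; simp [u]; omega
      have hvb : b ≠ v := by rw [Ne, Fin.ext_iff]; simp [v]; omega
      simp [htr', hω, hub, hvb]
    · show _ = 1 + (pathF n v + m)
      rw [htr', htr, pathF_eq_single_add_single (i := u) (j := v) (by simp [u, v]; omega)]
      abel

def pathParam (n : ℕ) : (Finset.Icc 2 (n - 1) → ℝ) →ᵃ[ℝ] (Fin n → ℝ) :=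
  (Fintype.linearCombination ℝ fun j : Finset.Icc 2 (n - 1) => pathF n j).toAffineMap +
    AffineMap.const ℝ _ 1

lemma pathParam_apply (α : Finset.Icc 2 (n - 1) → ℝ) :
    pathParam n α = 1 + ∑ j, α j • pathF n j := by
  simp [pathParam, Fintype.linearCombination_apply, add_comm]

lemma sum_smul_pathF_apply (c : Finset.Icc 2 (n - 1) → ℝ) (i : Fin n) :
    (∑ j, c j • pathF n j) i =
      ∑ j : Finset.Icc 2 (n - 1),
        ((if (j : ℕ) = i + 1 then c j else 0) + if (j : ℕ) = i then c j else 0) := by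
  simp only [Finset.sum_apply, Pi.smul_apply, pathF, smul_eq_mul]
  refine Finset.sum_congr rfl fun j _ => ?_
  split_ifs <;> first | omega | ring

lemma linearIndependent_pathF :
    LinearIndependent ℝ fun j : Finset.Icc 2 (n - 1) => pathF n j := by
  rw [Fintype.linearIndependent_iff]
  intro c hc
  let d : ℕ → ℝ := fun k => if h : k ∈ Finset.Icc 2 (n - 1) then c ⟨k, h⟩ else 0
  have hsum : ∀ k, ∑ j : Finset.Icc 2 (n - 1), (if (j : ℕ) = k then c j else 0) = d k := by
    intro k
    by_cases hk : k ∈ Finset.Icc 2 (n - 1)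
    · rw [Fintype.sum_eq_single ⟨k, hk⟩ fun j hj => if_neg fun h => hj (Subtype.ext h)]
      simp only [d, dif_pos hk, if_true]
    · refine (Finset.sum_eq_zero fun (j : Finset.Icc 2 (n - 1)) _ =>
        if_neg fun h : (j : ℕ) = k => hk (h ▸ j.2)).trans ?_
      simp only [d, dif_neg hk]
  -- the coordinate of `∑ c_j f_j` at `v_{k+1}` is `d (k + 1) + d k`, so the `d k` vanish in turn
  have hd : ∀ k, d k = 0 := by
    intro k
    induction k with
    | zero => simp [d]
    | succ k ih =>
      by_cases hk : k < n
      · have := congrFun hc ⟨k, hk⟩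
        rwa [sum_smul_pathF_apply, Finset.sum_add_distrib, hsum, hsum, ih, add_zero] at this
      · simp only [d, Finset.mem_Icc, dite_eq_right_iff]
        omega
  intro j
  simpa only [d, dif_pos j.2] using hd j

lemma pathParam_injective : Function.Injective (pathParam n) := by
  intro α β h
  rw [pathParam_apply, pathParam_apply, add_right_inj] at h
  exact linearIndependent_pathF.fintypeLinearCombination_injective
    (by simpa only [Fintype.linearCombination_apply] using h)

lemma image_one_add_pathNatSpan :
    (1 + ·) '' (pathNatSpan n : Set (Fin n → ℝ)) =
      pathParam n '' Set.univ.pi fun _ => Set.range ((↑) : ℕ → ℝ) := by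
  ext r
  simp only [Set.mem_image, SetLike.mem_coe, pathNatSpan,
    AddSubmonoid.mem_closure_range_iff_of_fintype, Set.mem_univ_pi, Set.mem_range]
  constructor
  · rintro ⟨_, ⟨c, rfl⟩, rfl⟩
    exact ⟨fun j => c j, fun j => ⟨c j, rfl⟩, by simp [pathParam_apply, Nat.cast_smul_eq_nsmul]⟩
  · rintro ⟨α, hα, rfl⟩
    choose c hc using hα
    exact ⟨_, ⟨c, rfl⟩, by simp [pathParam_apply, ← hc, Nat.cast_smul_eq_nsmul]⟩

lemma traceSet_pathGraph {a b : Fin n} (ha : (a : ℕ) = n - 1) (hb : (b : ℕ) = 0) :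
    traceSet (pathGraph n) a b =
      pathParam n '' Set.univ.pi fun _ => Set.range ((↑) : ℕ → ℝ) := by
  rw [← image_one_add_pathNatSpan]
  ext r
  constructor
  · rintro ⟨ω, hω, rfl⟩
    obtain ⟨m, hm, h⟩ := exists_trace_eq_indicator_add ω hb hω
    have hIic : Set.Iic a = Set.univ := Set.eq_univ_of_forall fun i => by
      rw [Set.mem_Iic, Fin.le_def]; omega
    exact ⟨m, hm, by rw [h, hIic, Set.indicator_univ]⟩
  · rintro ⟨m, hm, rfl⟩
    obtain ⟨ω, hω, h⟩ := exists_isProper_trace_eq_one_add ha hb hm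
    exact ⟨ω, hω, h.symm⟩

lemma convexHull_traceSet_pathGraph {a b : Fin n} (ha : (a : ℕ) = n - 1) (hb : (b : ℕ) = 0) :
    convexHull ℝ (traceSet (pathGraph n) a b) =
      pathParam n '' Set.univ.pi fun _ => Set.Ici 0 := by
  rw [traceSet_pathGraph ha hb, ← AffineMap.image_convexHull, convexHull_pi,
    convexHull_range_natCast]

lemma pathParam_image_univ_pi_Ioi :
    pathParam n '' (Set.univ.pi fun _ => Set.Ioi 0) =
      {r | ∃ α : ℕ → ℝ, (∀ j ∈ Finset.Icc 2 (n - 1), 0 < α j) ∧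
        r = (fun _ => 1) + ∑ j ∈ Finset.Icc 2 (n - 1), α j • pathF n j} := by
  ext r
  constructor
  · rintro ⟨β, hβ, rfl⟩
    refine ⟨fun j => if h : j ∈ Finset.Icc 2 (n - 1) then β ⟨j, h⟩ else 0,
      fun j hj => by simpa only [dif_pos hj, Set.mem_Ioi] using hβ ⟨j, hj⟩ trivial, ?_⟩
    rw [pathParam_apply, ← Finset.sum_coe_sort (Finset.Icc 2 (n - 1))]
    simp only [Finset.coe_mem, dite_true, Subtype.coe_eta]
    rfl
  · rintro ⟨α, hα, rfl⟩
    refine ⟨fun j => α j, fun j _ => hα j j.2, ?_⟩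
    rw [pathParam_apply, ← Finset.sum_coe_sort (Finset.Icc 2 (n - 1))]
    rfl

end PathGraph

/-- For the path graph on `v_1, …, v_n` with `vout = v_1`, `vin = v_n`, the set `Ψ(G)` is
precisely the set of vectors `𝟙 + Σ_{j=2}^{n-1} α_j f_j` with all `α_j > 0`. -/
theorem Psi_pathGraph (n : ℕ) (hn : 3 ≤ n) :
    Psi (SimpleGraph.pathGraph n) ⟨n - 1, by omega⟩ ⟨0, by omega⟩ =
      {r : Fin n → ℝ | ∃ α : ℕ → ℝ, (∀ j ∈ Finset.Icc 2 (n - 1), 0 < α j) ∧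
        r = (fun _ => 1) + ∑ j ∈ Finset.Icc 2 (n - 1), α j • pathF n j} := by
  rw [Psi, convexHull_traceSet_pathGraph rfl rfl,
    (pathParam n).intrinsicInterior_image_of_injective pathParam_injective,
    intrinsicInterior_univ_pi_Ici, pathParam_image_univ_pi_Ioi]

end
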